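/- If an input segment s of the instance S contains a reflection point p of the tour OPT, then no other tour vertex of OPT lies on s. -/
import Mathlib


noncomputable section

/-- Euclidean length between two points of the plane `ℝ × ℝ`. -/
def elen (p q : ℝ × ℝ) : ℝ := Real.sqrt ((p.1 - q.1) ^ 2 + (p.2 - q.2) ^ 2)

/-- The point set of the closed vertical unit segment whose bottom tip is `(s.1, s.2)`. -/
def segPts (s : ℝ × ℝ) : Set (ℝ × ℝ) := {p | p.1 = s.1 ∧ s.2 ≤ p.2 ∧ p.2 ≤ s.2 + 1}

/-- `p` is a tip (endpoint) of the vertical unit segment coded by `s`. -/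
def IsTip (s p : ℝ × ℝ) : Prop := p = (s.1, s.2) ∨ p = (s.1, s.2 + 1)

/-- Leg `A` lies above leg `B` (apart from their common point `v`):
every point of `A` other than `v` has strictly larger `y`-coordinate than
every point of `B` other than `v`. -/
def LegAbove (v : ℝ × ℝ) (A B : Set (ℝ × ℝ)) : Prop :=
  ∀ a ∈ A, ∀ b ∈ B, a ≠ v → b ≠ v → b.2 < a.2

/-- `P₁` is above `P₂` on the set `X` of `x`-coordinates: whenever a vertical line at
`x₀ ∈ X` meets both, every topmost point of `P₁ ∪ P₂` on that line belongs to `P₁`. -/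
def AboveOn (P₁ P₂ : Set (ℝ × ℝ)) (X : Set ℝ) : Prop :=
  ∀ x₀ ∈ X, (∃ p ∈ P₁, p.1 = x₀) → (∃ p ∈ P₂, p.1 = x₀) →
    ∀ p, p ∈ P₁ ∪ P₂ → p.1 = x₀ →
      (∀ p', p' ∈ P₁ ∪ P₂ → p'.1 = x₀ → p'.2 ≤ p.2) → p ∈ P₁

/-- An instance of TSPN over parallel vertical unit segments: a finite set of segments
(coded by their bottom tips) with pairwise distinct `x`-coordinates. -/
structure TSPNInstance where
  segs : Finset (ℝ × ℝ)
  distinct_x : ∀ s ∈ segs, ∀ t ∈ segs, s.1 = t.1 → s = t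

/-- A tour: a cyclic sequence of at least three points, each lying on some segment of
the instance. -/
structure Tour (I : TSPNInstance) where
  n : ℕ
  three_le : 3 ≤ n
  pt : Fin n → ℝ × ℝ
  pt_on_seg : ∀ i, ∃ s ∈ I.segs, pt i ∈ segPts s

namespace Tour

variable {I : TSPNInstance}

/-- Cyclic successor index. -/
def nxt (T : Tour I) (i : Fin T.n) : Fin T.n :=
  ⟨(i.1 + 1) % T.n, Nat.mod_lt _ (by have := T.three_le; omega)⟩

/-- Cyclic predecessor index. -/
def prv (T : Tour I) (i : Fin T.n) : Fin T.n :=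
  ⟨(i.1 + (T.n - 1)) % T.n, Nat.mod_lt _ (by have := T.three_le; omega)⟩

/-- The `i`-th leg of the tour: the closed straight segment joining `pt i` to its
cyclic successor. -/
def leg (T : Tour I) (i : Fin T.n) : Set (ℝ × ℝ) := segment ℝ (T.pt i) (T.pt (T.nxt i))

/-- Total Euclidean cost of the tour. -/
def cost (T : Tour I) : ℝ := ∑ i, elen (T.pt i) (T.pt (T.nxt i))

/-- The tour visits every segment of the instance. -/
def Feasible (T : Tour I) : Prop := ∀ s ∈ I.segs, ∃ i, T.pt i ∈ segPts s

/-- `OPT`: a feasible minimum-cost tour which in addition is non-self-crossing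
(no two non-adjacent legs intersect), has no vertical leg, and has no two
consecutive points on the same segment. -/
def IsOPT (T : Tour I) : Prop :=
  T.Feasible ∧
  (∀ T' : Tour I, T'.Feasible → T.cost ≤ T'.cost) ∧
  (∀ i j : Fin T.n, j ≠ i → j ≠ T.nxt i → i ≠ T.nxt j → T.leg i ∩ T.leg j = ∅) ∧
  (∀ i, (T.pt i).1 ≠ (T.pt (T.nxt i)).1) ∧
  (∀ i, ∀ s ∈ I.segs, T.pt i ∈ segPts s → T.pt (T.nxt i) ∉ segPts s)

/-- `pt i` is a left reflection point: both incident legs go strictly to the left of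
the segment containing it. -/
def IsLeftReflection (T : Tour I) (i : Fin T.n) : Prop :=
  ∃ s ∈ I.segs, T.pt i ∈ segPts s ∧
    (T.pt (T.prv i)).1 < s.1 ∧ (T.pt (T.nxt i)).1 < s.1

/-- `pt i` is a right reflection point. -/
def IsRightReflection (T : Tour I) (i : Fin T.n) : Prop :=
  ∃ s ∈ I.segs, T.pt i ∈ segPts s ∧
    s.1 < (T.pt (T.prv i)).1 ∧ s.1 < (T.pt (T.nxt i)).1

def IsReflection (T : Tour I) (i : Fin T.n) : Prop :=
  T.IsLeftReflection i ∨ T.IsRightReflection i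

/-- An ascending reflection point: every point of the outgoing leg (other than the
vertex itself) lies strictly above every point of the incoming leg. -/
def IsAscending (T : Tour I) (i : Fin T.n) : Prop :=
  T.IsReflection i ∧
    ∀ p ∈ T.leg i, ∀ p' ∈ T.leg (T.prv i), p ≠ T.pt i → p' ≠ T.pt i → p'.2 < p.2

/-- A descending reflection point. -/
def IsDescending (T : Tour I) (i : Fin T.n) : Prop :=
  T.IsReflection i ∧
    ∀ p ∈ T.leg i, ∀ p' ∈ T.leg (T.prv i), p ≠ T.pt i → p' ≠ T.pt i → p.2 < p'.2

/-- A pure reflection point: the two incident legs make equal angles with the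
(vertical) containing segment, i.e. the cosines `|Δy|/length` agree. -/
def IsPureReflection (T : Tour I) (i : Fin T.n) : Prop :=
  T.IsReflection i ∧
    |(T.pt (T.prv i)).2 - (T.pt i).2| * elen (T.pt i) (T.pt (T.nxt i)) =
      |(T.pt (T.nxt i)).2 - (T.pt i).2| * elen (T.pt i) (T.pt (T.prv i))

/-- A straight point: the two incident legs are collinear and lie on opposite sides
of the containing segment. -/
def IsStraight (T : Tour I) (i : Fin T.n) : Prop :=
  ∃ s ∈ I.segs, T.pt i ∈ segPts s ∧
    Collinear ℝ ({T.pt (T.prv i), T.pt i, T.pt (T.nxt i)} : Set (ℝ × ℝ)) ∧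
    (((T.pt (T.prv i)).1 < s.1 ∧ s.1 < (T.pt (T.nxt i)).1) ∨
     ((T.pt (T.nxt i)).1 < s.1 ∧ s.1 < (T.pt (T.prv i)).1))

/-- The points of the forward subpath starting at vertex `a` and consisting of `k`
consecutive legs. -/
def fwdPts (T : Tour I) (a : Fin T.n) (k : ℕ) : Set (ℝ × ℝ) :=
  ⋃ m ∈ Set.Iio k, T.leg ((T.nxt)^[m] a)

/-- The `m`-th vertex of a directed subpath starting at `a`
(forward along the orientation if `d = true`, backward otherwise). -/
def dirIdx (T : Tour I) (d : Bool) (a : Fin T.n) (m : ℕ) : Fin T.n :=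
  if d then (T.nxt)^[m] a else (T.prv)^[m] a

/-- The `m`-th leg of a directed subpath starting at `a`. -/
def dirLeg (T : Tour I) (d : Bool) (a : Fin T.n) (m : ℕ) : Set (ℝ × ℝ) :=
  if d then T.leg ((T.nxt)^[m] a) else T.leg ((T.prv)^[m + 1] a)

/-- The points of the directed subpath starting at `a` with `k` legs. -/
def dirPts (T : Tour I) (d : Bool) (a : Fin T.n) (k : ℕ) : Set (ℝ × ℝ) :=
  ⋃ m ∈ Set.Iio k, T.dirLeg d a m

end Tour

/-- The `y`-coordinate of cover-line `C_τ` (`τ = 0, 1, 2, …`): horizontal lines spaced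
1 apart, the first one passing through the bottom tip of the topmost segment. -/
def coverY (I : TSPNInstance) (τ : ℕ) : ℝ :=
  sSup ((fun s : ℝ × ℝ => s.2) '' (↑I.segs : Set (ℝ × ℝ))) - τ

/-- The strip `S_τ`: the closed region between `C_τ` and `C_{τ+1}`. -/
def strip (I : TSPNInstance) (τ : ℕ) : Set (ℝ × ℝ) :=
  {p | coverY I (τ + 1) ≤ p.2 ∧ p.2 ≤ coverY I τ}

/-- Cover-line `C_τ` meets segment `s`. -/
def MeetsCover (I : TSPNInstance) (s : ℝ × ℝ) (τ : ℕ) : Prop :=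
  s.2 ≤ coverY I τ ∧ coverY I τ ≤ s.2 + 1

/-- `s` is covered by `C_τ`: the topmost cover-line meeting it. -/
def CoveredBy (I : TSPNInstance) (s : ℝ × ℝ) (τ : ℕ) : Prop :=
  MeetsCover I s τ ∧ ∀ τ' < τ, ¬ MeetsCover I s τ'

/-- A top segment of strip `S_τ`: a segment of the instance meeting `C_τ`. -/
def IsTopSeg (I : TSPNInstance) (τ : ℕ) (s : ℝ × ℝ) : Prop :=
  s ∈ I.segs ∧ MeetsCover I s τ

/-- A bottom segment of strip `S_τ`: a segment of the instance covered by `C_{τ+1}`. -/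
def IsBotSeg (I : TSPNInstance) (τ : ℕ) (s : ℝ × ℝ) : Prop :=
  s ∈ I.segs ∧ CoveredBy I s (τ + 1)

/-- A polygonal path inside strip `S_τ`, with vertices `q 0, …, q k`. -/
structure GenPath (I : TSPNInstance) (τ : ℕ) where
  k : ℕ
  q : ℕ → ℝ × ℝ
  in_strip : ∀ m ≤ k, q m ∈ strip I τ

namespace GenPath

variable {I : TSPNInstance} {τ : ℕ}

/-- The points of the path between vertex positions `a` and `b`. -/
def pts (P : GenPath I τ) (a b : ℕ) : Set (ℝ × ℝ) :=
  ⋃ m ∈ Set.Ico a b, segment ℝ (P.q m) (P.q (m + 1))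

/-- All points of the path. -/
def allPts (P : GenPath I τ) : Set (ℝ × ℝ) := P.pts 0 P.k

/-- Total Euclidean length of the path. -/
def len (P : GenPath I τ) : ℝ := ∑ m ∈ Finset.range P.k, elen (P.q m) (P.q (m + 1))

/-- The number of edges of the path in the position range `[a, b)` meeting the vertical
line `x = x₀` (the shadow of that portion at `x₀`). -/
def subShadow (P : GenPath I τ) (a b : ℕ) (x₀ : ℝ) : ℕ :=
  {m : ℕ | a ≤ m ∧ m < b ∧ ∃ p ∈ segment ℝ (P.q m) (P.q (m + 1)), p.1 = x₀}.ncard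

/-- The shadow of the whole path at `x₀`. -/
def shadow (P : GenPath I τ) (x₀ : ℝ) : ℕ := P.subShadow 0 P.k x₀

/-- The path meets the vertical line `x = x₀`. -/
def Meets (P : GenPath I τ) (x₀ : ℝ) : Prop := ∃ p ∈ P.allPts, p.1 = x₀

/-- Intrinsic reflection vertex of a polygonal path: both neighbours lie strictly on
the same side of the vertical line through the vertex. -/
def ReflAt (P : GenPath I τ) (m : ℕ) : Prop :=
  0 < m ∧ m < P.k ∧
    (((P.q (m - 1)).1 < (P.q m).1 ∧ (P.q (m + 1)).1 < (P.q m).1) ∨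
     ((P.q m).1 < (P.q (m - 1)).1 ∧ (P.q m).1 < (P.q (m + 1)).1))

/-- Ascending reflection vertex of a polygonal path. -/
def AscAt (P : GenPath I τ) (m : ℕ) : Prop :=
  P.ReflAt m ∧
    ∀ p ∈ segment ℝ (P.q m) (P.q (m + 1)), ∀ p' ∈ segment ℝ (P.q (m - 1)) (P.q m),
      p ≠ P.q m → p' ≠ P.q m → p'.2 < p.2

/-- Descending reflection vertex of a polygonal path. -/
def DescAt (P : GenPath I τ) (m : ℕ) : Prop :=
  P.ReflAt m ∧
    ∀ p ∈ segment ℝ (P.q m) (P.q (m + 1)), ∀ p' ∈ segment ℝ (P.q (m - 1)) (P.q m),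
      p ≠ P.q m → p' ≠ P.q m → p.2 < p'.2

/-- The `m`-th vertex lies on a top segment of the strip. -/
def TopAt (P : GenPath I τ) (m : ℕ) : Prop :=
  ∃ s, IsTopSeg I τ s ∧ P.q m ∈ segPts s

/-- The `m`-th vertex lies on a bottom segment of the strip. -/
def BotAt (P : GenPath I τ) (m : ℕ) : Prop :=
  ∃ s, IsBotSeg I τ s ∧ P.q m ∈ segPts s

/-- Both endpoints on the same cover-line: a loop. -/
def IsLoopG (P : GenPath I τ) : Prop :=
  ((P.q 0).2 = coverY I τ ∧ (P.q P.k).2 = coverY I τ) ∨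
  ((P.q 0).2 = coverY I (τ + 1) ∧ (P.q P.k).2 = coverY I (τ + 1))

/-- Endpoints on different cover-lines: a ladder. -/
def IsLadderG (P : GenPath I τ) : Prop :=
  ((P.q 0).2 = coverY I τ ∧ (P.q P.k).2 = coverY I (τ + 1)) ∨
  ((P.q 0).2 = coverY I (τ + 1) ∧ (P.q P.k).2 = coverY I τ)

/-- The portion of the path between reflection vertices at positions `a ≤ b` is a sink:
all reflection vertices in between are all ascending or all descending, and they all
lie on top segments or all on bottom segments. -/
def IsSinkSeg (P : GenPath I τ) (a b : ℕ) : Prop :=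
  P.ReflAt a ∧ P.ReflAt b ∧ a ≤ b ∧
  ((∀ m, a ≤ m → m ≤ b → P.ReflAt m → P.AscAt m) ∨
   (∀ m, a ≤ m → m ≤ b → P.ReflAt m → P.DescAt m)) ∧
  ((∀ m, a ≤ m → m ≤ b → P.ReflAt m → P.TopAt m) ∨
   (∀ m, a ≤ m → m ≤ b → P.ReflAt m → P.BotAt m))

/-- The portion of the path between reflection vertices at positions `a < b` is a
zig-zag: all reflection vertices in between are all ascending or all descending, and
the containing segments of consecutive reflection vertices alternate between top and
bottom segments. -/
def IsZigzagSeg (P : GenPath I τ) (a b : ℕ) : Prop :=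
  P.ReflAt a ∧ P.ReflAt b ∧ a < b ∧
  ((∀ m, a ≤ m → m ≤ b → P.ReflAt m → P.AscAt m) ∨
   (∀ m, a ≤ m → m ≤ b → P.ReflAt m → P.DescAt m)) ∧
  (∀ m m', a ≤ m → m < m' → m' ≤ b → P.ReflAt m → P.ReflAt m' →
    (∀ m'', m < m'' → m'' < m' → ¬ P.ReflAt m'') →
    ((P.TopAt m ∧ P.BotAt m') ∨ (P.BotAt m ∧ P.TopAt m')))

end GenPath

/-- The `m`-th vertex of the path is a tip of some input segment. -/
def IsTipVertex (I : TSPNInstance) {τ : ℕ} (P : GenPath I τ) (m : ℕ) : Prop :=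
  ∃ s ∈ I.segs, IsTip s (P.q m)

/-- A portion of the tour `T` lying inside strip `S_τ`: every edge is contained in a
leg of `T` and every interior vertex is a tour vertex. -/
structure TourPathInStrip (I : TSPNInstance) (T : Tour I) (τ : ℕ) extends GenPath I τ where
  edges_sub : ∀ m < k, ∃ i : Fin T.n, segment ℝ (q m) (q (m + 1)) ⊆ T.leg i
  interior_vertex : ∀ m, 0 < m → m < k → ∃ i : Fin T.n, q m = T.pt i

def TourPathInStrip.gp {I : TSPNInstance} {T : Tour I} {τ : ℕ}
    (P : TourPathInStrip I T τ) : GenPath I τ := P.toGenPath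

/-- A (maximal) subpath of `OPT_τ`: a tour path in the strip whose two endpoints — its
entry points — lie on the two bounding cover-lines. -/
structure StripPath (I : TSPNInstance) (T : Tour I) (τ : ℕ)
    extends TourPathInStrip I T τ where
  entry0 : (q 0).2 = coverY I τ ∨ (q 0).2 = coverY I (τ + 1)
  entryk : (q k).2 = coverY I τ ∨ (q k).2 = coverY I (τ + 1)

namespace StripPath

variable {I : TSPNInstance} {T : Tour I} {τ : ℕ}

def gp (P : StripPath I T τ) : GenPath I τ := P.toTourPathInStrip.toGenPath

/-- Position `m` of the path is a reflection point of the tour. -/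
def ReflAt (P : StripPath I T τ) (m : ℕ) : Prop :=
  0 < m ∧ m < P.k ∧ ∃ i : Fin T.n, P.q m = T.pt i ∧ T.IsReflection i

/-- Position `m` of the path is an ascending reflection point of the tour. -/
def AscAt (P : StripPath I T τ) (m : ℕ) : Prop :=
  0 < m ∧ m < P.k ∧ ∃ i : Fin T.n, P.q m = T.pt i ∧ T.IsAscending i

/-- Position `m` of the path is a descending reflection point of the tour. -/
def DescAt (P : StripPath I T τ) (m : ℕ) : Prop :=
  0 < m ∧ m < P.k ∧ ∃ i : Fin T.n, P.q m = T.pt i ∧ T.IsDescending i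

def IsLoop (P : StripPath I T τ) : Prop := P.gp.IsLoopG

def IsLadder (P : StripPath I T τ) : Prop := P.gp.IsLadderG

/-- A cover-line loop: the path travels along one of the two cover-lines. -/
def IsCoverLineLoop (P : StripPath I T τ) : Prop :=
  ∃ c : ℝ, (c = coverY I τ ∨ c = coverY I (τ + 1)) ∧ ∀ m ≤ P.k, (P.q m).2 = c

end StripPath

/-- A sink section of a loop/ladder `P`: the reflection points at positions
`r a, …, r b` are all ascending or all descending, and all lie on top segments or all
on bottom segments. -/
def SinkSegS (I : TSPNInstance) (T : Tour I) (τ : ℕ) (P : StripPath I T τ)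
    (r : ℕ → ℕ) (a b : ℕ) : Prop :=
  ((∀ j, a ≤ j → j ≤ b → P.AscAt (r j)) ∨ (∀ j, a ≤ j → j ≤ b → P.DescAt (r j))) ∧
  ((∀ j, a ≤ j → j ≤ b → P.gp.TopAt (r j)) ∨ (∀ j, a ≤ j → j ≤ b → P.gp.BotAt (r j)))

/-- A zig-zag section of a loop/ladder `P`: the reflection points at positions
`r a, …, r b` are all ascending or all descending, and their containing segments
alternate between top and bottom segments. -/
def ZigzagSegS (I : TSPNInstance) (T : Tour I) (τ : ℕ) (P : StripPath I T τ)
    (r : ℕ → ℕ) (a b : ℕ) : Prop :=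
  ((∀ j, a ≤ j → j ≤ b → P.AscAt (r j)) ∨ (∀ j, a ≤ j → j ≤ b → P.DescAt (r j))) ∧
  (∀ j, a ≤ j → j < b →
    ((P.gp.TopAt (r j) ∧ P.gp.BotAt (r (j + 1))) ∨
     (P.gp.BotAt (r j) ∧ P.gp.TopAt (r (j + 1)))))

/-- The block of reflection points `r a, …, r b` spans, in order, a sink, followed by a
zig-zag, followed by a sink, where any of the three sections may be trivial and the
last reflection of a section is common with the first reflection of the next. -/
def BlockOK (I : TSPNInstance) (T : Tour I) (τ : ℕ) (P : StripPath I T τ)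
    (r : ℕ → ℕ) (a b : ℕ) : Prop :=
  ∃ c d, a ≤ c ∧ c ≤ d ∧ d ≤ b ∧
    SinkSegS I T τ P r a c ∧ ZigzagSegS I T τ P r c d ∧ SinkSegS I T τ P r d b

lemma elen_eq_dist (p q : ℝ × ℝ) :
    elen p q = dist (⟨p.1, p.2⟩ : ℂ) (⟨q.1, q.2⟩ : ℂ) := by
  rw [Complex.dist_eq_re_im]; rfl

lemma elen_strict_tri {a b c : ℝ × ℝ}
    (h : (a.1 < b.1 ∧ c.1 < b.1) ∨ (b.1 < a.1 ∧ b.1 < c.1)) :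
    elen a c < elen a b + elen b c := by
  rw [elen_eq_dist, elen_eq_dist, elen_eq_dist]
  set za : ℂ := ⟨a.1, a.2⟩
  set zb : ℂ := ⟨b.1, b.2⟩
  set zc : ℂ := ⟨c.1, c.2⟩
  refine lt_of_le_of_ne (dist_triangle za zb zc) ?_
  intro heq
  have hw : Wbtw ℝ za zb zc := dist_add_dist_eq_iff.mp heq.symm
  obtain ⟨u, v, hu, hv, huv, hsum⟩ := mem_segment_iff_wbtw.mpr hw
  have hre : u * a.1 + v * c.1 = b.1 := by
    have := congrArg Complex.re hsum
    simpa [Complex.add_re, Complex.smul_re] using this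
  rcases h with ⟨h1, h2⟩ | ⟨h1, h2⟩
  · have e1 : u * (b.1 - a.1) + v * (b.1 - c.1) = 0 := by
      linear_combination b.1 * huv - hre
    have e2 : 0 ≤ u * (b.1 - a.1) := mul_nonneg hu (by linarith)
    have e3 : 0 ≤ v * (b.1 - c.1) := mul_nonneg hv (by linarith)
    have hu0 : u = 0 := by
      rcases mul_eq_zero.mp (by linarith : u * (b.1 - a.1) = 0) with h | h
      · exact h
      · linarith
    have hv0 : v = 0 := by
      rcases mul_eq_zero.mp (by linarith : v * (b.1 - c.1) = 0) with h | h
      · exact h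
      · linarith
    rw [hu0, hv0] at huv; norm_num at huv
  · have e1 : u * (a.1 - b.1) + v * (c.1 - b.1) = 0 := by
      linear_combination hre - b.1 * huv
    have e2 : 0 ≤ u * (a.1 - b.1) := mul_nonneg hu (by linarith)
    have e3 : 0 ≤ v * (c.1 - b.1) := mul_nonneg hv (by linarith)
    have hu0 : u = 0 := by
      rcases mul_eq_zero.mp (by linarith : u * (a.1 - b.1) = 0) with h | h
      · exact h
      · linarith
    have hv0 : v = 0 := by
      rcases mul_eq_zero.mp (by linarith : v * (c.1 - b.1) = 0) with h | h
      · exact h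
      · linarith
    rw [hu0, hv0] at huv; norm_num at huv

lemma adj3 {n : ℕ} (hn : n = 3) {a b : ℕ} (ha : a < n) (hb : b < n)
    (hne : b ≠ a) : b = (a + 1) % n ∨ a = (b + 1) % n := by
  subst hn; omega


/-- If an input segment contains a reflection point of `OPT`, then no
other tour vertex of `OPT` lies on that segment. -/
theorem statement8 (I : TSPNInstance) (T : Tour I) (hT : T.IsOPT)
    (i : Fin T.n) (s : ℝ × ℝ) (hs : s ∈ I.segs) (hps : T.pt i ∈ segPts s)
    (hrefl : T.IsReflection i) :
    ∀ j : Fin T.n, T.pt j ∈ segPts s → T.pt j = T.pt i := by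
  obtain ⟨s', hs', hps', hside⟩ :
      ∃ s' ∈ I.segs, T.pt i ∈ segPts s' ∧
        (((T.pt (T.prv i)).1 < s'.1 ∧ (T.pt (T.nxt i)).1 < s'.1) ∨
         (s'.1 < (T.pt (T.prv i)).1 ∧ s'.1 < (T.pt (T.nxt i)).1)) := by
    rcases hrefl with ⟨s', h1, h2, h3, h4⟩ | ⟨s', h1, h2, h3, h4⟩
    · exact ⟨s', h1, h2, Or.inl ⟨h3, h4⟩⟩
    · exact ⟨s', h1, h2, Or.inr ⟨h3, h4⟩⟩
  have hxi : (T.pt i).1 = s'.1 := hps'.1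
  intro j hj
  by_contra hne
  have hji : j ≠ i := fun h => hne (by rw [h])
  have hN3 := T.three_le
  have hN0 : 0 < T.n := by omega
  rcases Nat.lt_or_ge T.n 4 with hlt | hN4
  · -- n = 3 : j is adjacent to i
    have hn3 : T.n = 3 := by omega
    have hvi := i.2
    have hvj := j.2
    have hvne : j.1 ≠ i.1 := fun h => hji (Fin.ext h)
    have key : j.1 = (i.1 + 1) % T.n ∨ i.1 = (j.1 + 1) % T.n :=
      adj3 hn3 hvi hvj hvne
    rcases key with h | h
    · have hx : T.nxt i = j := Fin.ext h.symm
      exact hT.2.2.2.2 i s hs hps (by rw [hx]; exact hj)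
    · have hx : T.nxt j = i := Fin.ext h.symm
      exact hT.2.2.2.2 j s hs hj (by rw [hx]; exact hps)
  · -- n ≥ 4 : shortcut i out of the tour
    obtain ⟨K, hK⟩ : ∃ K, T.n = K + 2 := ⟨T.n - 2, by omega⟩
    have hK2 : 2 ≤ K := by omega
    have hmod : ∀ m : ℕ, (i.1 + 1 + m) % T.n < T.n := fun m => Nat.mod_lt _ hN0
    set A : ℕ → Fin T.n := fun m => ⟨(i.1 + 1 + m) % T.n, hmod m⟩ with hAdef
    have hA_prv : A K = T.prv i := by
      apply Fin.ext
      show (i.1 + 1 + K) % T.n = (i.1 + (T.n - 1)) % T.n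
      congr 1; omega
    have hA_i : A (K + 1) = i := by
      apply Fin.ext
      show (i.1 + 1 + (K + 1)) % T.n = i.1
      have h1 : i.1 + 1 + (K + 1) = i.1 + T.n := by omega
      rw [h1, Nat.add_mod_right, Nat.mod_eq_of_lt i.2]
    have hA_0 : A 0 = T.nxt i := by
      apply Fin.ext
      show (i.1 + 1 + 0) % T.n = (i.1 + 1) % T.n
      rw [Nat.add_zero]
    have hA_N : A (K + 2) = T.nxt i := by
      apply Fin.ext
      show (i.1 + 1 + (K + 2)) % T.n = (i.1 + 1) % T.n
      have h1 : i.1 + 1 + (K + 2) = i.1 + 1 + T.n := by omega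
      rw [h1, Nat.add_mod_right]
    have hAnxt : ∀ m : ℕ, T.nxt (A m) = A (m + 1) := by
      intro m
      apply Fin.ext
      show ((i.1 + 1 + m) % T.n + 1) % T.n = (i.1 + 1 + (m + 1)) % T.n
      rw [Nat.mod_add_mod]
      congr 1
    have hsurj : ∀ k : Fin T.n, k ≠ i → ∃ m : ℕ, m < K + 1 ∧ A m = k := by
      intro k hk
      have hkv : k.1 ≠ i.1 := fun h => hk (Fin.ext h)
      have hk2 := k.2
      have hi2 := i.2
      rcases Nat.lt_or_ge i.1 k.1 with h | h
      · refine ⟨k.1 - (i.1 + 1), by omega, Fin.ext ?_⟩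
        show (i.1 + 1 + (k.1 - (i.1 + 1))) % T.n = k.1
        have h1 : i.1 + 1 + (k.1 - (i.1 + 1)) = k.1 := by omega
        rw [h1, Nat.mod_eq_of_lt hk2]
      · have h' : k.1 < i.1 := by omega
        refine ⟨k.1 + T.n - (i.1 + 1), by omega, Fin.ext ?_⟩
        show (i.1 + 1 + (k.1 + T.n - (i.1 + 1))) % T.n = k.1
        have h1 : i.1 + 1 + (k.1 + T.n - (i.1 + 1)) = k.1 + T.n := by omega
        rw [h1, Nat.add_mod_right, Nat.mod_eq_of_lt hk2]
    -- the shortcut tour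
    set T' : Tour I :=
      { n := K + 1
        three_le := by omega
        pt := fun m => T.pt (A m.1)
        pt_on_seg := fun m => T.pt_on_seg _ } with hT'def
    have hfeas : T'.Feasible := by
      intro t ht
      obtain ⟨k, hk⟩ := hT.1 t ht
      by_cases hki : k = i
      · have hts : t = s := by
          apply I.distinct_x t ht s hs
          have h1 : (T.pt i).1 = t.1 := by rw [← hki]; exact hk.1
          have h2 : (T.pt i).1 = s.1 := hps.1
          rw [← h1, h2]
        obtain ⟨m, hm, hAm⟩ := hsurj j hji
        refine ⟨⟨m, hm⟩, ?_⟩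
        show T.pt (A m) ∈ segPts t
        rw [hAm, hts]; exact hj
      · obtain ⟨m, hm, hAm⟩ := hsurj k hki
        refine ⟨⟨m, hm⟩, ?_⟩
        show T.pt (A m) ∈ segPts t
        rw [hAm]; exact hk
    -- cost computation
    have hcostT : T.cost =
        (∑ m ∈ Finset.range K, elen (T.pt (A m)) (T.pt (A (m + 1)))) +
          elen (T.pt (T.prv i)) (T.pt i) + elen (T.pt i) (T.pt (T.nxt i)) := by
      have hbij : Function.Bijective (fun m : Fin T.n => A m.1) := by
        apply Finite.injective_iff_bijective.mp
        intro a b hab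
        apply Fin.ext
        have h1 : (i.1 + 1 + a.1) % T.n = (i.1 + 1 + b.1) % T.n := congrArg Fin.val hab
        have h2 : a.1 % T.n = b.1 % T.n := Nat.ModEq.add_left_cancel' (i.1 + 1) h1
        rwa [Nat.mod_eq_of_lt a.2, Nat.mod_eq_of_lt b.2] at h2
      have step1 : T.cost = ∑ m : Fin T.n, elen (T.pt (A m.1)) (T.pt (T.nxt (A m.1))) :=
        (Fintype.sum_bijective _ hbij _ _ (fun m => rfl)).symm
      have step2 : T.cost = ∑ m ∈ Finset.range T.n, elen (T.pt (A m)) (T.pt (A (m + 1))) := by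
        rw [step1]
        rw [← Fin.sum_univ_eq_sum_range (fun m => elen (T.pt (A m)) (T.pt (A (m + 1)))) T.n]
        exact Finset.sum_congr rfl (fun m _ => by rw [hAnxt])
      rw [step2, hK, Finset.sum_range_succ, Finset.sum_range_succ, hA_prv, hA_i, hA_N]
    have hcostT' : T'.cost =
        (∑ m ∈ Finset.range K, elen (T.pt (A m)) (T.pt (A (m + 1)))) +
          elen (T.pt (T.prv i)) (T.pt (T.nxt i)) := by
      have step1 : T'.cost =
          ∑ m ∈ Finset.range (K + 1), elen (T.pt (A m)) (T.pt (A ((m + 1) % (K + 1)))) := by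
        rw [← Fin.sum_univ_eq_sum_range
          (fun m => elen (T.pt (A m)) (T.pt (A ((m + 1) % (K + 1))))) (K + 1)]
        exact Finset.sum_congr rfl (fun m _ => rfl)
      rw [step1, Finset.sum_range_succ, Nat.mod_self, hA_prv, hA_0]
      congr 1
      refine Finset.sum_congr rfl (fun m hm => ?_)
      have hm' : m < K := Finset.mem_range.mp hm
      rw [Nat.mod_eq_of_lt (by omega : m + 1 < K + 1)]
    have hstrict : elen (T.pt (T.prv i)) (T.pt (T.nxt i)) <
        elen (T.pt (T.prv i)) (T.pt i) + elen (T.pt i) (T.pt (T.nxt i)) := by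
      apply elen_strict_tri
      rcases hside with ⟨h1, h2⟩ | ⟨h1, h2⟩
      · exact Or.inl ⟨by linarith [hxi.ge, hxi.le], by linarith [hxi.ge]⟩
      · exact Or.inr ⟨by linarith [hxi.le], by linarith [hxi.le]⟩
    have hlt : T'.cost < T.cost := by rw [hcostT, hcostT']; linarith
    exact absurd (hT.2.1 T' hfeas) (not_le.mpr hlt)
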